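/- arXiv:2509.24064 — 5 statements merged into one kernel-verified Lean document; each statement's English description precedes it below -/
import Mathlib

section
/- For any graph G containing k distinct perfect matchings and any host graph H with m edges, the number of induced copies of G in H is at most (1/k) * binomial(m, v(G)/2). -/
/-- The number of induced copies of `G` in `H`: the number of vertex subsets of `H`
whose induced subgraph is isomorphic to `G`. -/
noncomputable def inducedCopies {α β : Type*} [Fintype β]
    (G : SimpleGraph α) (H : SimpleGraph β) : ℕ :=
  Nat.card {s : Finset β // Nonempty (G ≃g (H.induce (↑s : Set β)))}

/-- A perfect matching on a finite vertex type has exactly `card α / 2` edges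
(stated multiplicatively). -/
lemma pm_card {α : Type*} [Fintype α] {G : SimpleGraph α} {M : G.Subgraph}
    (hM : M.IsPerfectMatching) : 2 * M.edgeSet.ncard = Fintype.card α := by
  classical
  obtain ⟨hmatch, hspan⟩ := hM
  have h : ∀ v : α, ∃! w, M.Adj v w := fun v => hmatch (hspan v)
  let p : α → α := fun v => (h v).choose
  have hadj : ∀ v, M.Adj v (p v) := fun v => (h v).choose_spec.1
  have huniq : ∀ v w, M.Adj v w → w = p v := fun v w hw => (h v).choose_spec.2 w hw
  let f : α → Sym2 α := fun v => s(v, p v)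
  have hmem : ∀ v ∈ (Finset.univ : Finset α), f v ∈ M.edgeSet.toFinset := by
    intro v _
    rw [Set.mem_toFinset]
    exact hadj v
  have hcount := Finset.card_eq_sum_card_fiberwise hmem
  have hfib : ∀ e ∈ M.edgeSet.toFinset,
      (Finset.univ.filter fun v => f v = e).card = 2 := by
    intro e
    refine Sym2.ind (fun a b he => ?_) e
    rw [Set.mem_toFinset, SimpleGraph.Subgraph.mem_edgeSet] at he
    have hne : a ≠ b := he.ne
    have hset : (Finset.univ.filter fun v => f v = s(a, b)) = {a, b} := by
      ext v
      simp only [Finset.mem_filter, Finset.mem_univ, true_and, Finset.mem_insert,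
        Finset.mem_singleton]
      constructor
      · intro hv
        have hvmem : v ∈ f v := by simp [f]
        rw [hv] at hvmem
        simpa using hvmem
      · rintro (rfl | rfl)
        · have hb : b = p v := huniq v b he
          simp [f, ← hb]
        · have ha : a = p v := huniq v a he.symm
          simp only [f, ← ha]
          exact Sym2.eq_swap
    rw [hset, Finset.card_pair hne]
  rw [Finset.sum_congr rfl hfib, Finset.sum_const, smul_eq_mul] at hcount
  rw [Set.ncard_eq_toFinset_card']
  rw [Finset.card_univ] at hcount
  omega

/-- If `G` (with an even number of vertices) contains `k ≥ 1` distinct perfect matchings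
and `H` has `m` edges, then the number of induced copies of `G` in `H` is at most
`(1/k) * choose m (v(G)/2)`. -/
theorem stmt0 {α β : Type*} [Fintype α] [Fintype β]
    (G : SimpleGraph α) (H : SimpleGraph β) (k m : ℕ)
    (hEven : Even (Fintype.card α)) (hk0 : 0 < k)
    (hk : k ≤ Nat.card {M : G.Subgraph // M.IsPerfectMatching})
    (hm : Nat.card H.edgeSet = m) :
    (inducedCopies G H : ℚ) ≤ (1 / k) * (m.choose (Fintype.card α / 2)) := by
  classical
  set r : ℕ := Fintype.card α / 2 with hr
  set E0 : Finset (Sym2 β) := H.edgeSet.toFinset with hE0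
  have hE0card : E0.card = m := by
    rw [hE0, Set.toFinset_card, ← Nat.card_eq_fintype_card, hm]
  -- Abbreviations for the two subtypes
  let C := {s : Finset β // Nonempty (G ≃g (H.induce (↑s : Set β)))}
  let P := {M : G.Subgraph // M.IsPerfectMatching}
  -- choose an isomorphism for each copy
  let e : (c : C) → G ≃g (H.induce (↑c.1 : Set β)) := fun c => c.2.some
  let φ : C → α → β := fun c a => ((e c) a : β)
  have hφinj : ∀ c : C, Function.Injective (φ c) := by
    intro c a a' h
    exact (e c).toEquiv.injective (Subtype.ext h)
  have hφmem : ∀ (c : C) (a : α), φ c a ∈ c.1 := fun c a => ((e c) a).2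
  have hφsurj : ∀ (c : C), ∀ b ∈ c.1, ∃ a, φ c a = b := by
    intro c b hb
    refine ⟨(e c).symm ⟨b, hb⟩, ?_⟩
    exact congrArg Subtype.val ((e c).apply_symm_apply ⟨b, hb⟩)
  have hφadj : ∀ (c : C) (a a' : α), G.Adj a a' → H.Adj (φ c a) (φ c a') := by
    intro c a a' h
    have := (e c).map_adj_iff.mpr h
    simpa [SimpleGraph.comap_adj] using this
  -- the injection into r-element subsets of the edge set of H
  let F : P × C → Finset (Sym2 β) := fun x =>
    x.1.1.edgeSet.toFinset.image (Sym2.map (φ x.2))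
  have hFsub : ∀ x : P × C, F x ⊆ E0 := by
    intro x z hz
    obtain ⟨y, hy, rfl⟩ := Finset.mem_image.mp hz
    rw [Set.mem_toFinset] at hy
    revert hy
    refine Sym2.ind (fun a a' hy => ?_) y
    rw [SimpleGraph.Subgraph.mem_edgeSet] at hy
    rw [Sym2.map_pair_eq, hE0, Set.mem_toFinset, SimpleGraph.mem_edgeSet]
    exact hφadj x.2 a a' hy.adj_sub
  have hFcard : ∀ x : P × C, (F x).card = r := by
    intro x
    have hinj := Sym2.map.injective (hφinj x.2)
    rw [Finset.card_image_of_injective _ hinj]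
    have h2 := pm_card x.1.2
    rw [Set.ncard_eq_toFinset_card'] at h2
    omega
  have hFspan : ∀ (x : P × C) (b : β), b ∈ x.2.1 ↔ ∃ z ∈ F x, b ∈ z := by
    intro x b
    constructor
    · intro hb
      obtain ⟨a, rfl⟩ := hφsurj x.2 b hb
      obtain ⟨hmatch, hspan⟩ := x.1.2
      obtain ⟨w, hw, -⟩ := hmatch (hspan a)
      refine ⟨Sym2.map (φ x.2) s(a, w), ?_, ?_⟩
      · exact Finset.mem_image_of_mem _ (by
          rw [Set.mem_toFinset, SimpleGraph.Subgraph.mem_edgeSet]; exact hw)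
      · rw [Sym2.map_pair_eq]
        simp
    · rintro ⟨z, hz, hbz⟩
      obtain ⟨y, hy, rfl⟩ := Finset.mem_image.mp hz
      revert hbz
      refine Sym2.ind (fun a a' hbz => ?_) y
      rw [Sym2.map_pair_eq, Sym2.mem_iff] at hbz
      rcases hbz with rfl | rfl
      · exact hφmem x.2 a
      · exact hφmem x.2 a'
  -- injectivity
  have hmain : ∀ u v : P × C, F u = F v → u.2 = v.2 →
      ∀ a a', u.1.1.Adj a a' → v.1.1.Adj a a' := by
    intro u v hF h2 a a' hadj
    have hmemF : Sym2.map (φ u.2) s(a, a') ∈ F u :=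
      Finset.mem_image_of_mem _ (by
        rw [Set.mem_toFinset, SimpleGraph.Subgraph.mem_edgeSet]; exact hadj)
    rw [hF] at hmemF
    obtain ⟨y, hy, hmap⟩ := Finset.mem_image.mp hmemF
    have hyeq : y = s(a, a') := by
      apply Sym2.map.injective (hφinj v.2)
      rw [hmap, h2]
    rw [Set.mem_toFinset, hyeq, SimpleGraph.Subgraph.mem_edgeSet] at hy
    exact hy
  let F' : P × C → {E : Finset (Sym2 β) // E ∈ E0.powersetCard r} := fun x =>
    ⟨F x, Finset.mem_powersetCard.mpr ⟨hFsub x, hFcard x⟩⟩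
  have hF'inj : Function.Injective F' := by
    intro x y h
    have hF : F x = F y := congrArg Subtype.val h
    have h2 : x.2 = y.2 := by
      apply Subtype.ext
      ext b
      rw [hFspan x b, hF, ← hFspan y b]
    have h1 : x.1 = y.1 := by
      apply Subtype.ext
      ext a a'
      · constructor
        · intro _; exact y.1.2.2 a
        · intro _; exact x.1.2.2 a
      · exact ⟨hmain x y hF h2 a a', hmain y x hF.symm h2.symm a a'⟩
    exact Prod.ext h1 h2
  have hcard : Nat.card (P × C) ≤ Nat.card {E : Finset (Sym2 β) // E ∈ E0.powersetCard r} :=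
    Nat.card_le_card_of_injective F' hF'inj
  rw [Nat.card_prod] at hcard
  have hT : Nat.card {E : Finset (Sym2 β) // E ∈ E0.powersetCard r} = m.choose r := by
    rw [Nat.card_eq_fintype_card, Fintype.card_coe, Finset.card_powersetCard, hE0card]
  rw [hT] at hcard
  have hkey : k * inducedCopies G H ≤ m.choose r := by
    calc k * inducedCopies G H ≤ Nat.card P * Nat.card C :=
          Nat.mul_le_mul hk le_rfl
      _ ≤ m.choose r := hcard
  rw [one_div, inv_mul_eq_div, le_div_iff₀ (by exact_mod_cast hk0)]
  rw [mul_comm] at hkey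
  exact_mod_cast hkey
end

section
/- A locally directed graph is acyclic (contains no locally directed closed walk) if and only if its double cover (a multi-digraph) contains no directed closed walk. -/
/-- A locally directed graph: a multigraph without self-loops (edge `e` has two distinct
endpoints `fst e ≠ snd e`) together with a sign (`Bool`) for each incident
vertex–edge pair. -/
structure LocalDigraph (V E : Type*) where
  fst : E → V
  snd : E → V
  ne : ∀ e, fst e ≠ snd e
  sgnFst : E → Bool
  sgnSnd : E → Bool

namespace LocalDigraph

variable {V E : Type*} [DecidableEq V]

/-- The sign of edge `e` at an incident vertex `x`. -/
def sgn (G : LocalDigraph V E) (x : V) (e : E) : Bool :=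
  if x = G.fst e then G.sgnFst e else G.sgnSnd e

/-- A locally directed closed walk of length `t`: cyclically, edge `e i` joins `v i` to
`v (i+1)`, and at each vertex `v i` the signs of the outgoing edge `e i` and the incoming
edge `e (i-1)` differ. -/
def IsClosedWalk (G : LocalDigraph V E) {t : ℕ} (v : ZMod t → V) (e : ZMod t → E) : Prop :=
  ∀ i : ZMod t,
    ((G.fst (e i) = v i ∧ G.snd (e i) = v (i + 1)) ∨
      (G.snd (e i) = v i ∧ G.fst (e i) = v (i + 1))) ∧
    G.sgn (v i) (e i) ≠ G.sgn (v i) (e (i - 1))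

/-- A local digraph is acyclic if it has no locally directed closed walk. -/
def Acyclic (G : LocalDigraph V E) : Prop :=
  ¬ ∃ (t : ℕ) (_ : 0 < t) (v : ZMod t → V) (e : ZMod t → E), G.IsClosedWalk v e

/-- Source map of the double cover: the directed edge `(e, b)` starts at
`(fst e, sgnFst e)` if `b`, and at `(snd e, sgnSnd e)` otherwise. -/
def dcSrc (G : LocalDigraph V E) : E × Bool → V × Bool := fun p =>
  if p.2 then (G.fst p.1, G.sgnFst p.1) else (G.snd p.1, G.sgnSnd p.1)

/-- Target map of the double cover: the directed edge `(e, b)` ends at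
`(snd e, !sgnSnd e)` if `b`, and at `(fst e, !sgnFst e)` otherwise. -/
def dcTgt (G : LocalDigraph V E) : E × Bool → V × Bool := fun p =>
  if p.2 then (G.snd p.1, !G.sgnSnd p.1) else (G.fst p.1, !G.sgnFst p.1)

end LocalDigraph

/-- A locally directed graph is acyclic iff its double cover (a multi-digraph on
`V × Bool` with edge set `E × Bool`) contains no directed closed walk. -/
theorem stmt7 {V E : Type*} [DecidableEq V] (G : LocalDigraph V E) :
    G.Acyclic ↔
      ¬ ∃ (t : ℕ) (_ : 0 < t) (w : ZMod t → E × Bool),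
        ∀ i : ZMod t, G.dcTgt (w i) = G.dcSrc (w (i + 1)) := by
  constructor
  · -- Acyclic → no dc closed walk
    intro hA hdc
    obtain ⟨t, ht, w, hw⟩ := hdc
    apply hA
    refine ⟨t, ht, fun i => (G.dcSrc (w i)).1, fun i => (w i).1, ?_⟩
    have hsrc : ∀ i, (G.dcSrc (w i)).2 = G.sgn (G.dcSrc (w i)).1 (w i).1 := by
      intro i
      rcases hb : (w i).2 with _ | _ <;>
        simp [LocalDigraph.dcSrc, LocalDigraph.sgn, hb, (G.ne (w i).1).symm]
    have htgt : ∀ i, (G.dcTgt (w i)).2 = ! G.sgn (G.dcTgt (w i)).1 (w i).1 := by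
      intro i
      rcases hb : (w i).2 with _ | _ <;>
        simp [LocalDigraph.dcTgt, LocalDigraph.sgn, hb, (G.ne (w i).1).symm]
    intro i
    beta_reduce
    constructor
    · -- endpoints
      have h1 := congrArg Prod.fst (hw i)
      rcases hb : (w i).2 with _ | _
      · right
        constructor
        · simp [LocalDigraph.dcSrc, hb]
        · rw [← h1]; simp [LocalDigraph.dcTgt, hb]
      · left
        constructor
        · simp [LocalDigraph.dcSrc, hb]
        · rw [← h1]; simp [LocalDigraph.dcTgt, hb]
    · -- signs
      have h2 := hw (i - 1)
      rw [sub_add_cancel] at h2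
      have e1 : (G.dcSrc (w i)).2 = ! G.sgn (G.dcSrc (w i)).1 (w (i - 1)).1 := by
        rw [← h2, htgt]
      rw [hsrc i] at e1
      rw [e1]
      simp
  · -- no dc closed walk → Acyclic
    intro hdc hwalk
    obtain ⟨t, ht, v, e, h⟩ := hwalk
    apply hdc
    refine ⟨t, ht, fun i => (e i, decide (v i = G.fst (e i))), ?_⟩
    have hA : ∀ i, (v i = G.fst (e i) ∧ v (i + 1) = G.snd (e i)) ∨
        (v i ≠ G.fst (e i) ∧ v i = G.snd (e i) ∧ v (i + 1) = G.fst (e i)) := by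
      intro i
      rcases (h i).1 with ⟨h1, h2⟩ | ⟨h1, h2⟩
      · exact Or.inl ⟨h1.symm, h2.symm⟩
      · refine Or.inr ⟨?_, h1.symm, h2.symm⟩
        intro hc
        exact G.ne (e i) (by rw [← hc, h1])
    have hsrc : ∀ i, G.dcSrc (e i, decide (v i = G.fst (e i)))
        = (v i, G.sgn (v i) (e i)) := by
      intro i
      by_cases hb : v i = G.fst (e i)
      · simp [LocalDigraph.dcSrc, LocalDigraph.sgn, hb]
      · rcases hA i with ⟨h1, _⟩ | ⟨_, h1, _⟩
        · exact absurd h1 hb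
        · simp [LocalDigraph.dcSrc, LocalDigraph.sgn, hb, h1, (G.ne (e i)).symm]
    have htgt : ∀ i, G.dcTgt (e i, decide (v i = G.fst (e i)))
        = (v (i + 1), ! G.sgn (v (i + 1)) (e i)) := by
      intro i
      rcases hA i with ⟨h1, h2⟩ | ⟨h0, h1, h2⟩
      · have hne : v (i + 1) ≠ G.fst (e i) := by
          rw [h2]; exact (G.ne (e i)).symm
        simp [LocalDigraph.dcTgt, LocalDigraph.sgn, h1, h2, hne, (G.ne (e i)).symm]
      · simp [LocalDigraph.dcTgt, LocalDigraph.sgn, h0, h2]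
    intro i
    rw [htgt i, hsrc (i + 1)]
    have hs := (h (i + 1)).2
    rw [add_sub_cancel_right] at hs
    ext
    · rfl
    · simp only []
      rcases hx : G.sgn (v (i + 1)) (e i) with _ | _ <;>
        rcases hy : G.sgn (v (i + 1)) (e (i + 1)) with _ | _ <;>
        simp_all
end

section
/- Every locally directed acyclic graph (LDAG) admits a topological sort: there is an ordering v_1, ..., v_n of the vertices and signs s_1, ..., s_n ∈ {+,−} such that for any i < j and any edge e between v_i and v_j, sgn(v_i, e) = s_i. -/
open Function Relation

namespace Relation

variable {α : Type*} {r : α → α → Prop}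

theorem TransGen.exists_nat_path {a b : α} (h : TransGen r a b) :
    ∃ n, 0 < n ∧ ∃ f : ℕ → α, f 0 = a ∧ f n = b ∧ ∀ i < n, r (f i) (f (i + 1)) := by
  induction h using TransGen.head_induction_on with
  | @single a hab => exact ⟨1, one_pos, fun i => if i = 0 then a else b, rfl, rfl, by simpa⟩
  | @head a c hac _ ih =>
    obtain ⟨n, -, f, rfl, rfl, hf⟩ := ih
    refine ⟨n + 1, n.succ_pos, fun | 0 => a | i + 1 => f i, rfl, rfl, ?_⟩
    rintro (_ | i) hi
    · exact hac
    · exact hf i (by omega)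

theorem TransGen.exists_zmod_cycle {a : α} (h : TransGen r a a) :
    ∃ t, 0 < t ∧ ∃ f : ZMod t → α, ∀ i, r (f i) (f (i + 1)) := by
  obtain ⟨n, hn, f, hf0, hfn, hf⟩ := h.exists_nat_path
  have : NeZero n := ⟨hn.ne'⟩
  refine ⟨n, hn, fun i => f i.val, fun i => ?_⟩
  have hval : (i + 1).val = (i.val + 1) % n := by
    rw [← ZMod.val_natCast, Nat.cast_succ, ZMod.natCast_zmod_val]
  have hstep := hf i.val (ZMod.val_lt i)
  show r (f i.val) (f (i + 1).val)
  rcases (show i.val + 1 ≤ n from ZMod.val_lt i).lt_or_eq with hlt | heq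
  · rwa [hval, Nat.mod_eq_of_lt hlt]
  · rw [hval, heq, Nat.mod_self, hf0, ← hfn]
    rwa [heq] at hstep

theorem exists_linearOrder_of_transGen_irrefl (h : ∀ a, ¬ TransGen r a a) :
    ∃ l : LinearOrder α, ∀ a b, r a b → l.lt a b := by
  let : PartialOrder α :=
    { le := ReflTransGen r
      le_refl := fun _ => .refl
      le_trans := fun _ _ _ => ReflTransGen.trans
      le_antisymm := fun a b hab hba => by
        rcases reflTransGen_iff_eq_or_transGen.1 hab with rfl | hab; · rfl
        rcases reflTransGen_iff_eq_or_transGen.1 hba with rfl | hba; · rfl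
        exact (h a (hab.trans hba)).elim }
  refine ⟨(inferInstance : LinearOrder (LinearExtension α)), fun a b hab => ?_⟩
  exact lt_of_le_of_ne (toLinearExtension.monotone (ReflTransGen.single hab))
    fun hab' => by obtain rfl : a = b := hab'; exact h a (.single hab)

end Relation

theorem Fintype.exists_equiv_fin_strictMono_comp {α β : Type*} [Fintype α] [LinearOrder β]
    (f : α → β) (hf : Injective f) : ∃ v : Fin (Fintype.card α) ≃ α, StrictMono (f ∘ v) := by
  let := LinearOrder.lift' f hf
  exact ⟨(monoEquivOfFin α rfl).toEquiv, (monoEquivOfFin α rfl).strictMono⟩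

section FirstCopy

variable {V : Type*} [LinearOrder (V × Bool)]

def firstCopy (x : V) : V × Bool := min (x, false) (x, true)

theorem firstCopy_fst (x : V) : (firstCopy x).1 = x := by
  rcases min_choice (x, false) (x, true) with h | h <;> rw [firstCopy, h]

theorem firstCopy_le (x : V) (b : Bool) : firstCopy x ≤ (x, b) := by
  cases b
  · exact min_le_left _ _
  · exact min_le_right _ _

theorem firstCopy_injective : Injective (firstCopy : V → V × Bool) := fun x y h => by
  simpa only [firstCopy_fst] using congrArg Prod.fst h

end FirstCopy

namespace LocalDigraph

variable {V E : Type*}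

def Joins (G : LocalDigraph V E) (e : E) (x y : V) : Prop :=
  (G.fst e = x ∧ G.snd e = y) ∨ (G.snd e = x ∧ G.fst e = y)

theorem Joins.symm {G : LocalDigraph V E} {e : E} {x y : V} (h : G.Joins e x y) :
    G.Joins e y x :=
  (Or.symm h).imp And.symm And.symm

theorem joins_of_pair_eq {G : LocalDigraph V E} {e : E} {x y : V}
    (h : ({G.fst e, G.snd e} : Set V) = {x, y}) : G.Joins e x y :=
  (Set.pair_eq_pair_iff.1 h).imp id And.symm

variable [DecidableEq V]

def Step (G : LocalDigraph V E) (u w : V × Bool) : Prop :=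
  ∃ e, G.Joins e u.1 w.1 ∧ G.sgn u.1 e = !u.2 ∧ G.sgn w.1 e = w.2

theorem Acyclic.not_transGen_step {G : LocalDigraph V E} (h : G.Acyclic) (u : V × Bool) :
    ¬ TransGen G.Step u u := by
  intro hu
  obtain ⟨t, ht, f, hf⟩ := hu.exists_zmod_cycle
  choose e he using hf
  refine h ⟨t, ht, fun i => (f i).1, e, fun i => ⟨(he i).1, ?_⟩⟩
  have hout := (he (i - 1)).2.2
  rw [sub_add_cancel] at hout
  simp only [(he i).2.1, hout]
  exact Bool.not_ne_self _

theorem sgn_eq_of_firstCopy_lt [LinearOrder (V × Bool)] {G : LocalDigraph V E}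
    (hG : ∀ u w, G.Step u w → u < w) {e : E} {x y : V} (he : G.Joins e x y)
    (hxy : firstCopy x < firstCopy y) : G.sgn x e = !(firstCopy x).2 := by
  by_contra hne
  have hx : (x, G.sgn x e) = firstCopy x :=
    Prod.ext (firstCopy_fst x).symm (by rwa [Bool.eq_not_iff, not_not] at hne)
  have hstep : G.Step (y, !G.sgn y e) (x, G.sgn x e) :=
    ⟨e, he.symm, (Bool.not_not _).symm, rfl⟩
  exact lt_asymm hxy (hx ▸ (firstCopy_le y _).trans_lt (hG _ _ hstep))

end LocalDigraph

/-- Every LDAG admits a topological sort: an ordering `v 0, …, v (n-1)` of the vertices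
together with signs `s i` such that every edge between `v i` and `v j` with `i < j` has
sign `s i` at `v i`. -/
theorem stmt8 {V E : Type*} [DecidableEq V] [Fintype V] (G : LocalDigraph V E)
    (h : G.Acyclic) :
    ∃ (v : Fin (Fintype.card V) ≃ V) (s : Fin (Fintype.card V) → Bool),
      ∀ i j : Fin (Fintype.card V), i < j → ∀ e : E,
        ({G.fst e, G.snd e} : Set V) = {v i, v j} → G.sgn (v i) e = s i := by
  obtain ⟨l, hl⟩ := exists_linearOrder_of_transGen_irrefl h.not_transGen_step
  obtain ⟨v, hv⟩ :=
    Fintype.exists_equiv_fin_strictMono_comp firstCopy (firstCopy_injective (V := V))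
  exact ⟨v, fun i => !(firstCopy (v i)).2, fun i j hij e he =>
    LocalDigraph.sgn_eq_of_firstCopy_lt hl (LocalDigraph.joins_of_pair_eq he) (hv hij)⟩
end

section
/- Let H be a graph with at least one induced copy of C_5 and let (X_1,...,X_5) be a uniformly random induced embedding of C_5 into H. Then H(X_1 | X_2, X_3, X_4) ≤ H(X_1) − log_2 5. -/
open Finset

/-- `negMulLog₂ t = -t * log₂ t` (with value `0` at `t = 0`). -/
noncomputable def negMulLog2 (t : ℝ) : ℝ := if t = 0 then 0 else -t * Real.logb 2 t

open Classical in
/-- The Shannon entropy (base 2) of the random variable `g x`, where `x` is uniform on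
the finite set `T`. -/
noncomputable def uH {A S : Type*} (T : Finset A) (g : A → S) : ℝ :=
  ∑ s ∈ T.image g, negMulLog2 (((T.filter (fun t => g t = s)).card : ℝ) / (T.card : ℝ))

open Classical in
/-- The set of induced embeddings of the `5`-cycle `C₅` into `H`: injective maps
`x : ZMod 5 → V` such that `x i` and `x j` are adjacent iff `i` and `j` are consecutive. -/
noncomputable def C5set {V : Type*} [Fintype V] (H : SimpleGraph V) : Finset (ZMod 5 → V) :=
  Finset.univ.filter (fun x => Function.Injective x ∧
    ∀ i j : ZMod 5, H.Adj (x i) (x j) ↔ (j = i + 1 ∨ i = j + 1))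

/-!
For each `i` (mod 5) let `Yᵢ` resample `Xᵢ` given `(Xᵢ₊₁, Xᵢ₊₂, Xᵢ₊₃)`. Then `Yᵢ` is adjacent to
`Xᵢ₊₁` but not to `Xᵢ₊₂`, `Xᵢ₊₃`, and on a `5`-cycle this pattern determines `i`: the laws of
`(X, Yᵢ)` have disjoint supports, so their uniform mixture has entropy `log 5` more than their
average. By cyclic symmetry each `(X, Yᵢ)` has entropy `H(X) + H(X₁ | X₂, X₃, X₄)` and each `Yᵢ`
has the law of `X₁`; Gibbs' inequality against the product of the laws of `X` and `X₁` bounds the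
mixture's entropy by `H(X) + H(X₁)`.
-/

open Real

section UniformConditioning

variable {α β γ : Type*}

open Classical in
noncomputable def condProb (T : Finset α) (f : α → β) (g : α → γ) (y : β) (t : γ) : ℝ :=
  #{a ∈ T | f a = y ∧ g a = t} / #{a ∈ T | g a = t}

variable (T : Finset α)

open Classical in
theorem card_fiber_pos {g : α → γ} {a : α} (ha : a ∈ T) : 0 < #{b ∈ T | g b = g a} :=
  card_pos.mpr ⟨a, mem_filter.mpr ⟨ha, rfl⟩⟩

open Classical in
theorem uH_eq_sum_log (g : α → γ) :
    uH T g = (∑ a ∈ T, log (#T / #{b ∈ T | g b = g a})) / (#T * log 2) := by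
  rw [sum_comp (fun t => log (#T / #{b ∈ T | g b = t})) g, sum_div]
  refine sum_congr rfl fun t ht => ?_
  obtain ⟨a, ha, rfl⟩ := mem_image.mp ht
  have hm : (0 : ℝ) < #{b ∈ T | g b = g a} := Nat.cast_pos.mpr (card_fiber_pos T ha)
  have hN : (0 : ℝ) < #T := Nat.cast_pos.mpr (card_pos.mpr ⟨a, ha⟩)
  rw [negMulLog2, if_neg (by positivity), nsmul_eq_mul, logb, log_div hm.ne' hN.ne',
    log_div hN.ne' hm.ne']
  field_simp
  ring

theorem condProb_nonneg (f : α → β) (g : α → γ) (y : β) (t : γ) : 0 ≤ condProb T f g y t := by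
  unfold condProb; positivity

open Classical in
theorem exists_of_condProb_pos {f : α → β} {g : α → γ} {y : β} {t : γ}
    (h : 0 < condProb T f g y t) : ∃ a ∈ T, g a = t ∧ f a = y := by
  by_contra! hne
  have : #{a ∈ T | f a = y ∧ g a = t} = 0 :=
    card_eq_zero.mpr (filter_eq_empty_iff.mpr fun a ha h' => hne a ha h'.2 h'.1)
  simp [condProb, this] at h

open Classical in
theorem uH_pair_sub_uH (f : α → β) (g : α → γ) :
    uH T (fun a => (f a, g a)) - uH T g
      = -(∑ a ∈ T, log (condProb T f g (f a) (g a))) / (#T * log 2) := by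
  rw [uH_eq_sum_log, uH_eq_sum_log, ← sub_div, ← sum_sub_distrib, ← sum_neg_distrib]
  congr 1
  refine sum_congr rfl fun a ha => ?_
  have hN : (0 : ℝ) < #T := Nat.cast_pos.mpr (card_pos.mpr ⟨a, ha⟩)
  have hm : (0 : ℝ) < #{b ∈ T | g b = g a} := Nat.cast_pos.mpr (card_fiber_pos T ha)
  have hq : (0 : ℝ) < #{b ∈ T | f b = f a ∧ g b = g a} :=
    Nat.cast_pos.mpr (card_pos.mpr ⟨a, mem_filter.mpr ⟨ha, rfl, rfl⟩⟩)
  simp only [Prod.ext_iff]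
  rw [condProb, log_div hN.ne' hq.ne', log_div hN.ne' hm.ne', log_div hq.ne' hm.ne']
  ring

open Classical in
theorem sum_sum_condProb_mul [Fintype β] (f : α → β) (g : α → γ) (φ : β → γ → ℝ) :
    ∑ a ∈ T, ∑ y, condProb T f g y (g a) * φ y (g a) = ∑ a ∈ T, φ (f a) (g a) := by
  have hg : ∀ a ∈ T, g a ∈ T.image g := fun a ha => mem_image_of_mem g ha
  rw [← sum_fiberwise_of_maps_to' hg (fun t => ∑ y, condProb T f g y t * φ y t),
    ← sum_fiberwise_of_maps_to hg]
  refine sum_congr rfl fun t ht => ?_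
  obtain ⟨a, ha, rfl⟩ := mem_image.mp ht
  have hm : (0 : ℝ) < #{b ∈ T | g b = g a} := Nat.cast_pos.mpr (card_fiber_pos T ha)
  rw [sum_const, nsmul_eq_mul, mul_sum, ← sum_fiberwise {b ∈ T | g b = g a} f]
  refine sum_congr rfl fun y _ => ?_
  simp only [filter_filter, condProb, and_comm]
  rw [sum_congr rfl fun b hb => by rw [(mem_filter.mp hb).2.1, (mem_filter.mp hb).2.2],
    sum_const, nsmul_eq_mul]
  field_simp

end UniformConditioning

theorem mul_log_sub_log_le_sub {p q : ℝ} (hp : 0 < p) (hq : 0 < q) :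
    p * (log q - log p) ≤ q - p := by
  have h := log_le_sub_one_of_pos (div_pos hq hp)
  rw [log_div hq.ne' hp.ne'] at h
  calc p * (log q - log p) ≤ p * (q / p - 1) := mul_le_mul_of_nonneg_left h hp.le
    _ = q - p := by field_simp

theorem sum_sum_mul_log_sub_log_le {ι α : Type*} (s : Finset ι) (t : Finset α)
    (p : ι → α → ℝ) (q : α → ℝ) (hp : ∀ i ∈ s, ∀ a ∈ t, 0 ≤ p i a) (hq : ∀ a ∈ t, 0 ≤ q a)
    (hpq : ∀ i ∈ s, ∀ a ∈ t, 0 < p i a → 0 < q a)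
    (hdisj : ∀ a ∈ t, ∀ i ∈ s, ∀ j ∈ s, 0 < p i a → 0 < p j a → i = j) :
    ∑ i ∈ s, ∑ a ∈ t, p i a * (log (q a) - log (p i a))
      ≤ ∑ a ∈ t, q a - ∑ i ∈ s, ∑ a ∈ t, p i a := by
  classical
  have pointwise : ∀ i ∈ s, ∀ a ∈ t, p i a * (log (q a) - log (p i a))
      ≤ (if 0 < p i a then q a else 0) - p i a := by
    intro i hi a ha
    rcases (hp i hi a ha).lt_or_eq with hpos | hzero
    · rw [if_pos hpos]; exact mul_log_sub_log_le_sub hpos (hpq i hi a ha hpos)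
    · simp [← hzero]
  have support : ∀ a ∈ t, ∑ i ∈ s, (if 0 < p i a then q a else 0) ≤ q a := by
    intro a ha
    rw [← sum_filter, sum_const, nsmul_eq_mul]
    have : #{i ∈ s | 0 < p i a} ≤ 1 := card_le_one.mpr fun i hi j hj =>
      hdisj a ha i (mem_filter.mp hi).1 j (mem_filter.mp hj).1
        (mem_filter.mp hi).2 (mem_filter.mp hj).2
    exact mul_le_of_le_one_left (hq a ha) (by exact_mod_cast this)
  calc ∑ i ∈ s, ∑ a ∈ t, p i a * (log (q a) - log (p i a))
      ≤ ∑ i ∈ s, ∑ a ∈ t, ((if 0 < p i a then q a else 0) - p i a) :=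
        sum_le_sum fun i hi => sum_le_sum fun a ha => pointwise i hi a ha
    _ = ∑ a ∈ t, ∑ i ∈ s, (if 0 < p i a then q a else 0) - ∑ i ∈ s, ∑ a ∈ t, p i a := by
        simp only [sum_sub_distrib]; rw [sum_comm]
    _ ≤ ∑ a ∈ t, q a - ∑ i ∈ s, ∑ a ∈ t, p i a := by
        gcongr with a ha; exact support a ha

section InducedFiveCycles

variable {V : Type*} [Fintype V]

noncomputable def C5condProb (H : SimpleGraph V) (y : V) (t : V × V × V) : ℝ :=
  condProb (C5set H) (fun x => x 0) (fun x => (x 1, x 2, x 3)) y t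

variable {H : SimpleGraph V}

theorem comp_add_right_mem_C5set {x : ZMod 5 → V} (hx : x ∈ C5set H) (i : ZMod 5) :
    (fun k => x (k + i)) ∈ C5set H := by
  simp only [C5set, mem_filter, mem_univ, true_and] at hx ⊢
  refine ⟨hx.1.comp (add_left_injective i), fun a b => ?_⟩
  rw [hx.2, add_right_comm b, add_right_comm a, add_left_inj, add_left_inj]

theorem sum_C5set_comp_add_right (F : (ZMod 5 → V) → ℝ) (i : ZMod 5) :
    ∑ x ∈ C5set H, F (fun k => x (k + i)) = ∑ x ∈ C5set H, F x :=
  sum_nbij' (fun x k => x (k + i)) (fun x k => x (k + -i))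
    (fun x hx => comp_add_right_mem_C5set hx i) (fun x hx => comp_add_right_mem_C5set hx (-i))
    (fun x _ => by simp [add_assoc]) (fun x _ => by simp [add_assoc]) (fun _ _ => rfl)

theorem adj_of_mem_C5set {x : ZMod 5 → V} (hx : x ∈ C5set H) :
    H.Adj (x 0) (x 1) ∧ ¬H.Adj (x 0) (x 2) ∧ ¬H.Adj (x 0) (x 3) := by
  simp only [C5set, mem_filter, mem_univ, true_and] at hx
  exact ⟨(hx.2 0 1).mpr (by decide), (hx.2 0 2).not.mpr (by decide),
    (hx.2 0 3).not.mpr (by decide)⟩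

theorem eq_of_window_pattern {P : ZMod 5 → Prop} {i j : ZMod 5}
    (hi : P (1 + i) ∧ ¬P (2 + i) ∧ ¬P (3 + i)) (hj : P (1 + j) ∧ ¬P (2 + j) ∧ ¬P (3 + j)) :
    i = j := by
  obtain ⟨hi1, hi2, hi3⟩ := hi
  obtain ⟨hj1, hj2, hj3⟩ := hj
  fin_cases i <;> fin_cases j <;> first | rfl | contradiction

theorem window_pattern_of_C5condProb_pos {x : ZMod 5 → V} {y : V} {i : ZMod 5}
    (h : 0 < C5condProb H y (x (1 + i), x (2 + i), x (3 + i))) :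
    H.Adj y (x (1 + i)) ∧ ¬H.Adj y (x (2 + i)) ∧ ¬H.Adj y (x (3 + i)) := by
  obtain ⟨b, hb, hbw, rfl⟩ := exists_of_condProb_pos _ h
  simp only [Prod.mk.injEq] at hbw
  rw [← hbw.1, ← hbw.2.1, ← hbw.2.2]
  exact adj_of_mem_C5set hb

theorem sum_sum_C5condProb_mul (φ : V → V × V × V → ℝ) :
    ∑ x ∈ C5set H, ∑ y, C5condProb H y (x 1, x 2, x 3) * φ y (x 1, x 2, x 3)
      = ∑ x ∈ C5set H, φ (x 0) (x 1, x 2, x 3) :=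
  sum_sum_condProb_mul (C5set H) (fun x => x 0) (fun x => (x 1, x 2, x 3)) φ

theorem C5condProb_gibbs (q : V → ℝ) (hq : ∀ y, 0 ≤ q y) (hq_pos : ∀ b ∈ C5set H, 0 < q (b 0)) :
    5 * ∑ x ∈ C5set H, ∑ y, C5condProb H y (x 1, x 2, x 3) *
        (log (q y) - log (C5condProb H y (x 1, x 2, x 3)))
      ≤ #(C5set H) * ∑ y, q y - 5 * #(C5set H) := by
  -- `C5condProb H y (x (1 + i), x (2 + i), x (3 + i))` is the law of `x i` resampled given
  -- `(x (i + 1), x (i + 2), x (i + 3))`; rotating `x` by `i` turns it into the resampling of `x 0`.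
  have rotate : ∀ (F : (ZMod 5 → V) → V → ℝ) (i : ZMod 5),
      ∑ p ∈ C5set H ×ˢ univ, F (fun k => p.1 (k + i)) p.2 = ∑ x ∈ C5set H, ∑ y, F x y :=
    fun F i => by rw [sum_product]; exact sum_C5set_comp_add_right (fun x => ∑ y, F x y) i
  have gibbs := sum_sum_mul_log_sub_log_le univ (C5set H ×ˢ univ)
    (fun i p => C5condProb H p.2 (p.1 (1 + i), p.1 (2 + i), p.1 (3 + i))) (fun p => q p.2)
    (fun _ _ _ _ => condProb_nonneg ..) (fun _ _ => hq _)
    (fun i _ p _ hpos => by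
      obtain ⟨b, hb, -, hb0⟩ := exists_of_condProb_pos _ hpos
      rw [← hb0]
      exact hq_pos b hb)
    (fun p _ i _ j _ hi hj => eq_of_window_pattern (P := fun k => H.Adj p.2 (p.1 k))
      (window_pattern_of_C5condProb_pos hi) (window_pattern_of_C5condProb_pos hj))
  rw [sum_congr rfl fun i _ => rotate (fun x y => C5condProb H y (x 1, x 2, x 3) *
      (log (q y) - log (C5condProb H y (x 1, x 2, x 3)))) i,
    sum_congr rfl fun i _ => rotate (fun x y => C5condProb H y (x 1, x 2, x 3)) i,
    sum_product, sum_const] at gibbs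
  have hmass : ∑ x ∈ C5set H, ∑ y, C5condProb H y (x 1, x 2, x 3) = #(C5set H) := by
    simpa using sum_sum_C5condProb_mul (H := H) fun _ _ => 1
  simpa [hmass] using gibbs

open Classical in
theorem neg_sum_log_C5condProb_le (hne : (C5set H).Nonempty) :
    -∑ x ∈ C5set H, log (C5condProb H (x 0) (x 1, x 2, x 3))
      ≤ ∑ x ∈ C5set H, log (#(C5set H) / #{b ∈ C5set H | b 0 = x 0}) - #(C5set H) * log 5 := by
  set T := C5set H
  set n : V → ℝ := fun y => #{b ∈ T | b 0 = y}
  have hN : (0 : ℝ) < #T := Nat.cast_pos.mpr hne.card_pos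
  have hn : ∀ b ∈ T, 0 < n (b 0) := fun b hb => Nat.cast_pos.mpr (card_fiber_pos T hb)
  have hsum_n : ∑ y, n y = #T := by
    simp only [n]
    exact_mod_cast (card_eq_sum_card_fiberwise (s := T) (f := fun x : ZMod 5 → V => x 0)
      (t := univ) fun _ _ => mem_univ _).symm
  have gibbs := C5condProb_gibbs (fun y => 5 * n y / #T) (fun _ => by positivity)
    fun b hb => div_pos (mul_pos (by norm_num) (hn b hb)) hN
  rw [sum_sum_C5condProb_mul fun y t => log (5 * n y / #T) - log (C5condProb H y t),
    ← sum_div, ← mul_sum, hsum_n, mul_div_cancel_right₀ _ hN.ne'] at gibbs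
  have hlog : ∀ x ∈ T, log (5 * n (x 0) / #T) = log 5 - log (#T / n (x 0)) := fun x hx => by
    rw [log_div (mul_pos (by norm_num) (hn x hx)).ne' hN.ne', log_mul (by norm_num) (hn x hx).ne',
      log_div hN.ne' (hn x hx).ne']
    ring
  rw [sum_sub_distrib, sum_congr rfl hlog, sum_sub_distrib, sum_const, nsmul_eq_mul] at gibbs
  linarith

end InducedFiveCycles

/-- Let `(X₁,…,X₅)` be a uniformly random induced embedding of `C₅` into `H` (here
`Xᵢ = x (i-1)`). Then `H(X₁ ∣ X₂, X₃, X₄) ≤ H(X₁) - log₂ 5`, where the conditional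
entropy is expressed as a difference of joint entropies. -/
theorem stmt13 {V : Type*} [Fintype V] (H : SimpleGraph V) (hne : (C5set H).Nonempty) :
    uH (C5set H) (fun x => (x 0, x 1, x 2, x 3)) - uH (C5set H) (fun x => (x 1, x 2, x 3))
      ≤ uH (C5set H) (fun x => x 0) - Real.logb 2 5 := by
  have hN : (0 : ℝ) < #(C5set H) := Nat.cast_pos.mpr hne.card_pos
  rw [uH_pair_sub_uH, uH_eq_sum_log, logb, ← mul_div_mul_left (log 5) (log 2) hN.ne', ← sub_div]
  exact div_le_div_of_nonneg_right (neg_sum_log_C5condProb_le hne) (by positivity)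
end

section
/- For any directed acyclic graph H on n vertices, the number of induced copies of the directed path on three vertices DP_3 (vertices a → b → c with no edge between a and c) is at most n^3/24 + O(n^2); more precisely, it is at most (1/8) Σ_{s=1}^{n} (n+1−2s)^2. -/
/-- For a digraph given by the relation `r`, the number of induced copies of the directed
path `DP₃` on three vertices: triples `(a, b, c)` of distinct vertices whose only edges
are `a → b` and `b → c`. -/
noncomputable def DP3count {V : Type*} [Fintype V] (r : V → V → Prop) : ℕ :=
  Nat.card {t : V × V × V //
    (r t.1 t.2.1 ∧ r t.2.1 t.2.2 ∧ ¬ r t.1 t.2.2 ∧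
      ¬ r t.2.1 t.1 ∧ ¬ r t.2.2 t.2.1 ∧ ¬ r t.2.2 t.1) ∧
    t.1 ≠ t.2.1 ∧ t.2.1 ≠ t.2.2 ∧ t.1 ≠ t.2.2}

open Finset

namespace DP3aux

open Classical in
noncomputable def ind (P : Prop) : ℤ := if P then 1 else 0

variable {n : ℕ} (r : Fin n → Fin n → Prop)

noncomputable def X (i j : Fin n) : ℤ := ind (r i j) - ind (r j i)
noncomputable def Y (i k : Fin n) : ℤ :=
  ind (i < k ∧ ¬ r i k) - ind (k < i ∧ ¬ r k i)
noncomputable def F (i j k : Fin n) : ℤ := X r i j * Y r i k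
noncomputable def S6 (u v w : Fin n) : ℤ :=
  F r u v w + F r u w v + F r v u w + F r v w u + F r w u v + F r w v u

lemma X_self (i : Fin n) : X r i i = 0 := by simp [X]
lemma Y_self (i : Fin n) : Y r i i = 0 := by simp [Y]
lemma F_iik (i k : Fin n) : F r i i k = 0 := by simp [F, X_self]
lemma F_iji (i j : Fin n) : F r i j i = 0 := by simp [F, Y_self]

lemma split_pointwise (i j k : Fin n) :
    (if j < k then F r i j k + F r i k j else 0)
    = (if i < j ∧ j < k then F r i j k + F r i k j else 0)
    + (if j < i ∧ i < k then F r i j k + F r i k j else 0)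
    + (if j < k ∧ k < i then F r i j k + F r i k j else 0) := by
  by_cases hjk : j < k
  · rcases lt_trichotomy i j with h1 | h1 | h1
    · rw [if_pos hjk, if_pos ⟨h1, hjk⟩,
        if_neg (fun hc => absurd h1 (asymm hc.1)),
        if_neg (fun hc => absurd (lt_trans h1 hjk) (asymm hc.2))]
      ring
    · subst h1
      simp [F_iik, F_iji]
    · rcases lt_trichotomy i k with h2 | h2 | h2
      · rw [if_pos hjk, if_neg (fun hc => absurd h1 (asymm hc.1)),
          if_pos ⟨h1, h2⟩, if_neg (fun hc => absurd h2 (asymm hc.2))]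
        ring
      · subst h2
        simp [F_iik, F_iji]
      · rw [if_pos hjk, if_neg (fun hc => absurd (lt_trans hjk h2) (asymm hc.1)),
          if_neg (fun hc => absurd h2 (asymm hc.2)), if_pos ⟨hjk, h2⟩]
        ring
  · rw [if_neg hjk, if_neg (fun hc => hjk hc.2),
      if_neg (fun hc => hjk (lt_trans hc.1 hc.2)), if_neg (fun hc => hjk hc.1)]
    ring

variable (hf : ∀ u w, r u w → u < w)

lemma ind_pos {P : Prop} (h : P) : ind P = 1 := by simp [ind, h]
lemma ind_neg {P : Prop} (h : ¬ P) : ind P = 0 := by simp [ind, h]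

include hf in
lemma F_ijj (i j : Fin n) : F r i j j = 0 := by
  by_cases h1 : r i j
  · have hij := hf _ _ h1
    have : Y r i j = 0 := by
      rw [Y, ind_neg (fun hc => hc.2 h1),
        ind_neg (fun hc => absurd hij (asymm hc.1)), sub_self]
    simp [F, this]
  · by_cases h2 : r j i
    · have hji := hf _ _ h2
      have : Y r i j = 0 := by
        rw [Y, ind_neg (fun hc => absurd hji (asymm hc.1)),
          ind_neg (fun hc => hc.2 h2), sub_self]
      simp [F, this]
    · have : X r i j = 0 := by rw [X, ind_neg h1, ind_neg h2, sub_self]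
      simp [F, this]

lemma sum_pairs {α : Type*} [Fintype α] [LinearOrder α] (G : α → α → ℤ)
    (h : ∀ j, G j j = 0) :
    ∑ j, ∑ k, G j k = ∑ j, ∑ k, (if j < k then G j k + G k j else 0) := by
  have e1 : ∀ j k : α, (if j < k then G j k + G k j else 0)
      = (if j < k then G j k else 0) + (if j < k then G k j else 0) := by
    intro j k; by_cases h1 : j < k <;> simp [h1]
  have e2 : ∀ j k : α, G j k
      = (if j < k then G j k else 0) + (if k < j then G j k else 0) := by
    intro j k
    rcases lt_trichotomy j k with h1 | h1 | h1
    · simp [h1, asymm h1]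
    · subst h1; simp [h]
    · simp [asymm h1, h1]
  have swap : (∑ j, ∑ k, (if k < j then G j k else 0))
      = ∑ j, ∑ k, (if j < k then G k j else 0) := Finset.sum_comm
  calc ∑ j, ∑ k, G j k
      = ∑ j, ∑ k, ((if j < k then G j k else 0) + (if k < j then G j k else 0)) := by
        simp only [← e2]
    _ = (∑ j, ∑ k, (if j < k then G j k else 0))
        + ∑ j, ∑ k, (if k < j then G j k else 0) := by
        simp only [Finset.sum_add_distrib]
    _ = (∑ j, ∑ k, (if j < k then G j k else 0))
        + ∑ j, ∑ k, (if j < k then G k j else 0) := by rw [swap]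
    _ = ∑ j, ∑ k, (if j < k then G j k + G k j else 0) := by
        simp only [e1, Finset.sum_add_distrib]

include hf in
lemma sum_bf :
    ∑ i, (∑ j, X r i j) * (∑ k, Y r i k)
      = ∑ u, ∑ v, ∑ w, (if u < v ∧ v < w then S6 r u v w else 0) := by
  have step12 : ∀ i : Fin n, (∑ j, X r i j) * (∑ k, Y r i k)
      = ∑ j, ∑ k, (if j < k then F r i j k + F r i k j else 0) := by
    intro i
    rw [Finset.sum_mul_sum]
    exact sum_pairs (fun j k => F r i j k) (fun j => F_ijj r hf i j)
  have hB : (∑ i, ∑ j, ∑ k, (if j < i ∧ i < k then F r i j k + F r i k j else 0))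
      = ∑ u, ∑ v, ∑ w, (if u < v ∧ v < w then F r v u w + F r v w u else 0) :=
    Finset.sum_comm
  have hC : (∑ i, ∑ j, ∑ k, (if j < k ∧ k < i then F r i j k + F r i k j else 0))
      = ∑ u, ∑ v, ∑ w, (if u < v ∧ v < w then F r w u v + F r w v u else 0) := by
    rw [Finset.sum_comm]
    exact Finset.sum_congr rfl fun u _ => Finset.sum_comm
  calc ∑ i, (∑ j, X r i j) * (∑ k, Y r i k)
      = ∑ i, ∑ j, ∑ k, (if j < k then F r i j k + F r i k j else 0) :=
        Finset.sum_congr rfl (fun i _ => step12 i)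
    _ = (∑ i, ∑ j, ∑ k, (if i < j ∧ j < k then F r i j k + F r i k j else 0))
      + (∑ i, ∑ j, ∑ k, (if j < i ∧ i < k then F r i j k + F r i k j else 0))
      + (∑ i, ∑ j, ∑ k, (if j < k ∧ k < i then F r i j k + F r i k j else 0)) := by
        simp only [split_pointwise, Finset.sum_add_distrib]
    _ = (∑ u, ∑ v, ∑ w, (if u < v ∧ v < w then F r u v w + F r u w v else 0))
      + (∑ u, ∑ v, ∑ w, (if u < v ∧ v < w then F r v u w + F r v w u else 0))
      + (∑ u, ∑ v, ∑ w, (if u < v ∧ v < w then F r w u v + F r w v u else 0)) := by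
        rw [hB, hC]
    _ = ∑ u, ∑ v, ∑ w, (if u < v ∧ v < w then S6 r u v w else 0) := by
        simp only [← Finset.sum_add_distrib]
        refine Finset.sum_congr rfl fun u _ => Finset.sum_congr rfl fun v _ =>
          Finset.sum_congr rfl fun w _ => ?_
        by_cases h : u < v ∧ v < w
        · simp only [if_pos h, S6]; ring
        · simp [h]

lemma ind_congr {P Q : Prop} (h : P ↔ Q) : ind P = ind Q := by
  classical by_cases hp : P
  · rw [ind_pos hp, ind_pos (h.mp hp)]
  · rw [ind_neg hp, ind_neg (fun hq => hp (h.mpr hq))]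

include hf in
lemma count_eq :
    (DP3count r : ℤ)
      = ∑ u, ∑ v, ∑ w, (if u < v ∧ v < w then ind (r u v ∧ r v w ∧ ¬ r u w) else 0) := by
  classical
  set P : Fin n × Fin n × Fin n → Prop := fun t =>
    (r t.1 t.2.1 ∧ r t.2.1 t.2.2 ∧ ¬ r t.1 t.2.2 ∧
      ¬ r t.2.1 t.1 ∧ ¬ r t.2.2 t.2.1 ∧ ¬ r t.2.2 t.1) ∧
    t.1 ≠ t.2.1 ∧ t.2.1 ≠ t.2.2 ∧ t.1 ≠ t.2.2 with hP
  have h0 : DP3count r = (Finset.univ.filter P).card := by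
    rw [DP3count, Nat.card_eq_fintype_card, Fintype.card_subtype]
  have h1 : ((Finset.univ.filter P).card : ℤ) = ∑ t : Fin n × Fin n × Fin n, ind (P t) := by
    rw [Finset.card_filter]
    push_cast
    refine Finset.sum_congr rfl fun t _ => ?_
    by_cases h : P t
    · rw [if_pos h, ind_pos h]
    · rw [if_neg h, ind_neg h]
  have h2 : ∀ t : Fin n × Fin n × Fin n, ind (P t)
      = (if t.1 < t.2.1 ∧ t.2.1 < t.2.2
          then ind (r t.1 t.2.1 ∧ r t.2.1 t.2.2 ∧ ¬ r t.1 t.2.2) else 0) := by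
    intro t
    by_cases hor : t.1 < t.2.1 ∧ t.2.1 < t.2.2
    · rw [if_pos hor]
      refine ind_congr ⟨fun h => ⟨h.1.1, h.1.2.1, h.1.2.2.1⟩, fun h => ?_⟩
      exact ⟨⟨h.1, h.2.1, h.2.2,
          fun hc => absurd (hf _ _ hc) (asymm hor.1),
          fun hc => absurd (hf _ _ hc) (asymm hor.2),
          fun hc => absurd (hf _ _ hc) (asymm (lt_trans hor.1 hor.2))⟩,
        ne_of_lt hor.1, ne_of_lt hor.2, ne_of_lt (lt_trans hor.1 hor.2)⟩
    · rw [if_neg hor]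
      exact ind_neg fun h => hor ⟨hf _ _ h.1.1, hf _ _ h.1.2.1⟩
  rw [h0, h1]
  simp only [h2]
  simp only [Fintype.sum_prod_type]

include hf in
lemma key_ineq {u v w : Fin n} (huv : u < v) (hvw : v < w) :
    2 * ind (r u v ∧ r v w ∧ ¬ r u w) ≤ S6 r u v w := by
  have huw : u < w := lt_trans huv hvw
  have hvu : ¬ r v u := fun hc => absurd (hf _ _ hc) (asymm huv)
  have hwv : ¬ r w v := fun hc => absurd (hf _ _ hc) (asymm hvw)
  have hwu : ¬ r w u := fun hc => absurd (hf _ _ hc) (asymm huw)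
  have h1 : ¬ v < u := asymm huv
  have h2 : ¬ w < v := asymm hvw
  have h3 : ¬ w < u := asymm huw
  by_cases e1 : r u v <;> by_cases e2 : r v w <;> by_cases e3 : r u w <;>
    simp [S6, F, X, Y, ind, e1, e2, e3, hvu, hwv, hwu, huv, hvw, huw, h1, h2, h3]

include hf in
lemma col_b (i : Fin n) :
    (∑ j, ind (r i j)) + (∑ k, ind (i < k ∧ ¬ r i k)) = (n : ℤ) - 1 - (i : ℕ) := by
  rw [← Finset.sum_add_distrib]
  have e : ∀ j : Fin n, ind (r i j) + ind (i < j ∧ ¬ r i j) = ind (i < j) := by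
    intro j
    by_cases h : r i j
    · rw [ind_pos h, ind_neg (fun hc => hc.2 h), ind_pos (hf _ _ h), add_zero]
    · by_cases h2 : i < j
      · rw [ind_neg h, ind_pos ⟨h2, h⟩, ind_pos h2, zero_add]
      · rw [ind_neg h, ind_neg (fun hc => h2 hc.1), ind_neg h2, zero_add]
  simp only [e]
  have hcard : (∑ j : Fin n, ind (i < j))
      = (((Finset.univ.filter (fun j : Fin n => i < j)).card : ℕ) : ℤ) := by
    classical
    rw [Finset.card_filter]
    push_cast
    refine Finset.sum_congr rfl fun j _ => ?_
    by_cases h : i < j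
    · rw [ind_pos h, if_pos h]
    · rw [ind_neg h, if_neg h]
  rw [hcard]
  have : (Finset.univ.filter (fun j : Fin n => i < j)) = Finset.Ioi i := by
    ext j; simp
  rw [this, Fin.card_Ioi]
  have hi := i.isLt
  omega

include hf in
lemma col_f (i : Fin n) :
    (∑ j, ind (r j i)) + (∑ k, ind (k < i ∧ ¬ r k i)) = ((i : ℕ) : ℤ) := by
  rw [← Finset.sum_add_distrib]
  have e : ∀ j : Fin n, ind (r j i) + ind (j < i ∧ ¬ r j i) = ind (j < i) := by
    intro j
    by_cases h : r j i
    · rw [ind_pos h, ind_neg (fun hc => hc.2 h), ind_pos (hf _ _ h), add_zero]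
    · by_cases h2 : j < i
      · rw [ind_neg h, ind_pos ⟨h2, h⟩, ind_pos h2, zero_add]
      · rw [ind_neg h, ind_neg (fun hc => h2 hc.1), ind_neg h2, zero_add]
  simp only [e]
  have hcard : (∑ j : Fin n, ind (j < i))
      = (((Finset.univ.filter (fun j : Fin n => j < i)).card : ℕ) : ℤ) := by
    classical
    rw [Finset.card_filter]
    push_cast
    refine Finset.sum_congr rfl fun j _ => ?_
    by_cases h : j < i
    · rw [ind_pos h, if_pos h]
    · rw [ind_neg h, if_neg h]
  rw [hcard]
  have : (Finset.univ.filter (fun j : Fin n => j < i)) = Finset.Iio i := by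
    ext j; simp
  rw [this, Fin.card_Iio]

include hf in
lemma main_fin :
    8 * (DP3count r : ℤ) ≤ ∑ i : Fin n, ((n : ℤ) - 1 - 2 * ((i : ℕ) : ℤ)) ^ 2 := by
  have h1 : 2 * (DP3count r : ℤ) ≤ ∑ i, (∑ j, X r i j) * (∑ k, Y r i k) := by
    rw [sum_bf r hf, count_eq r hf]
    simp only [Finset.mul_sum]
    refine Finset.sum_le_sum fun u _ => Finset.sum_le_sum fun v _ =>
      Finset.sum_le_sum fun w _ => ?_
    by_cases h : u < v ∧ v < w
    · rw [if_pos h, if_pos h]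
      exact key_ineq r hf h.1 h.2
    · rw [if_neg h, if_neg h, mul_zero]
  have h2 : ∀ i : Fin n, 4 * ((∑ j, X r i j) * (∑ k, Y r i k))
      ≤ ((n : ℤ) - 1 - 2 * ((i : ℕ) : ℤ)) ^ 2 := by
    intro i
    have hb := col_b r hf i
    have hc := col_f r hf i
    have hX : (∑ j, X r i j) = (∑ j, ind (r i j)) - (∑ j, ind (r j i)) := by
      simp only [X]; rw [Finset.sum_sub_distrib]
    have hY : (∑ k, Y r i k)
        = (∑ k, ind (i < k ∧ ¬ r i k)) - (∑ k, ind (k < i ∧ ¬ r k i)) := by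
      simp only [Y]; rw [Finset.sum_sub_distrib]
    have hsum : (∑ j, X r i j) + (∑ k, Y r i k) = (n : ℤ) - 1 - 2 * ((i : ℕ) : ℤ) := by
      rw [hX, hY]; linarith
    nlinarith [sq_nonneg ((∑ j, X r i j) - (∑ k, Y r i k))]
  calc 8 * (DP3count r : ℤ) = 4 * (2 * (DP3count r : ℤ)) := by ring
    _ ≤ 4 * ∑ i, (∑ j, X r i j) * (∑ k, Y r i k) := by linarith
    _ = ∑ i, 4 * ((∑ j, X r i j) * (∑ k, Y r i k)) := by rw [Finset.mul_sum]
    _ ≤ ∑ i : Fin n, ((n : ℤ) - 1 - 2 * ((i : ℕ) : ℤ)) ^ 2 :=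
        Finset.sum_le_sum fun i _ => h2 i

lemma DP3count_congr {V W : Type*} [Fintype V] [Fintype W] (e : V ≃ W) (r : V → V → Prop) :
    DP3count r = DP3count (fun a b => r (e.symm a) (e.symm b)) := by
  apply Nat.card_congr
  refine Equiv.subtypeEquiv (e.prodCongr (e.prodCongr e)) ?_
  rintro ⟨a, b, c⟩
  simp [Equiv.prodCongr]

end DP3aux

/-- For a directed acyclic graph on `n` vertices, the number of induced copies of `DP₃`
is at most `(1/8) ∑_{s=1}^{n} (n + 1 - 2s)²`. -/
theorem stmt15 {V : Type*} [Fintype V] (r : V → V → Prop) (n : ℕ)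
    (hn : Fintype.card V = n)
    (hdag : ∃ f : V → ℕ, ∀ u w, r u w → f u < f w) :
    8 * (DP3count r : ℤ) ≤ ∑ s ∈ Finset.Icc 1 n, ((n : ℤ) + 1 - 2 * (s : ℤ)) ^ 2 := by
  classical
  obtain ⟨fr, hfr⟩ := hdag
  let e0 : V ≃ Fin n := Fintype.equivFinOfCardEq hn
  let g : V → ℕ := fun v => n * fr v + (e0 v : ℕ)
  have hmono : ∀ u w : V, fr u < fr w → g u < g w := by
    intro u w h
    have h1 : (e0 u : ℕ) < n := (e0 u).isLt
    have h2 : fr u + 1 ≤ fr w := h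
    calc n * fr u + (e0 u : ℕ) < n * fr u + n := by omega
      _ = n * (fr u + 1) := by ring
      _ ≤ n * fr w := Nat.mul_le_mul_left n h2
      _ ≤ n * fr w + (e0 w : ℕ) := Nat.le_add_right _ _
  have hginj : Function.Injective g := by
    intro u w h
    have hfr_eq : fr u = fr w := by
      rcases lt_trichotomy (fr u) (fr w) with hh | hh | hh
      · exact absurd h (Nat.ne_of_lt (hmono u w hh))
      · exact hh
      · exact absurd h.symm (Nat.ne_of_lt (hmono w u hh))
    have hval : (e0 u : ℕ) = (e0 w : ℕ) := by
      have h' := h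
      simp only [g, hfr_eq] at h'
      omega
    exact e0.injective (Fin.val_injective hval)
  let s : Finset ℕ := Finset.univ.image g
  have hs : s.card = n := by
    rw [Finset.card_image_of_injective _ hginj, Finset.card_univ, hn]
  let σ := s.orderIsoOfFin hs
  let p : V → Fin n := fun v => σ.symm ⟨g v, Finset.mem_image_of_mem g (Finset.mem_univ v)⟩
  have hp : ∀ u w : V, g u < g w → p u < p w := by
    intro u w h
    exact σ.symm.lt_iff_lt.mpr (Subtype.mk_lt_mk.mpr h)
  have hpinj : Function.Injective p := by
    intro u w h
    exact hginj (Subtype.mk_eq_mk.mp (σ.symm.injective h))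
  have hpbij : Function.Bijective p := by
    rw [Fintype.bijective_iff_injective_and_card]
    exact ⟨hpinj, by simp [hn]⟩
  let e : V ≃ Fin n := Equiv.ofBijective p hpbij
  have hf' : ∀ a b : Fin n, r (e.symm a) (e.symm b) → a < b := by
    intro a b hab
    have h1 : e (e.symm a) < e (e.symm b) := hp _ _ (hmono _ _ (hfr _ _ hab))
    simpa using h1
  rw [DP3aux.DP3count_congr e r]
  refine le_trans (DP3aux.main_fin (fun a b => r (e.symm a) (e.symm b)) hf') (le_of_eq ?_)
  rw [Fin.sum_univ_eq_sum_range (fun j => ((n : ℤ) - 1 - 2 * (j : ℤ)) ^ 2)]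
  refine Finset.sum_nbij' (fun j => j + 1) (fun t => t - 1) ?_ ?_ ?_ ?_ ?_
  · intro a ha; simp only [Finset.mem_range] at ha; simp only [Finset.mem_Icc]; omega
  · intro a ha; simp only [Finset.mem_Icc] at ha; simp only [Finset.mem_range]; omega
  · intro a _; show a + 1 - 1 = a; omega
  · intro a ha; simp only [Finset.mem_Icc] at ha; show a - 1 + 1 = a; omega
  · intro a _
    push_cast
    ring
end
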